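/- For any two probability density functions p and q on a measure space, the expectation under p of the absolute value of log(p/q) is bounded above by the Kullback-Leibler divergence d_KL(p,q) = ∫ p log(p/q) plus 2/e. -/

import Mathlib

open MeasureTheory Real

/- Only the set where `p < q` contributes to `|log (p/q)| - log (p/q)`; there, with `r = p/q`,
the integrand is `2 (-r log r) q ≤ (2/e) q`, and `q` integrates to `1`. -/

namespace Real

theorem negMulLog_le_exp_neg_one {x : ℝ} (hx : 0 ≤ x) : negMulLog x ≤ exp (-1) := by
  rcases hx.eq_or_lt with rfl | hx
  · simpa using (exp_pos (-1)).le
  -- `y - 1 ≤ y log y` at `y = e x`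
  have h := self_sub_one_le_mul_log (mul_nonneg (exp_pos 1).le hx.le)
  rw [log_mul (exp_pos 1).ne' hx.ne', log_exp] at h
  rw [negMulLog, exp_neg, inv_eq_one_div, le_div_iff₀' (exp_pos 1)]
  linarith

theorem abs_log_sub_log_mul_self_le {r : ℝ} (hr : 0 ≤ r) :
    (|log r| - log r) * r ≤ 2 * exp (-1) := by
  rcases le_or_gt 0 (log r) with hlog | hlog
  · rw [abs_of_nonneg hlog, sub_self, zero_mul]
    positivity
  · have h : (|log r| - log r) * r = 2 * negMulLog r := by
      rw [abs_of_neg hlog, negMulLog]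
      ring
    rw [h]
    gcongr
    exact negMulLog_le_exp_neg_one hr

end Real

theorem abs_log_div_sub_log_div_mul_le {p q : ℝ} (hp : 0 ≤ p) (hq : 0 ≤ q)
    (hpq : p ≠ 0 → q ≠ 0) :
    (|log (p / q)| - log (p / q)) * p ≤ 2 * exp (-1) * q := by
  rcases hp.eq_or_lt with rfl | hp
  · simpa using mul_nonneg (by positivity) hq
  have hq : 0 < q := hq.lt_of_ne' (hpq hp.ne')
  calc (|log (p / q)| - log (p / q)) * p = (|log (p / q)| - log (p / q)) * (p / q) * q := by
        field_simp
    _ ≤ 2 * exp (-1) * q :=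
        mul_le_mul_of_nonneg_right (abs_log_sub_log_mul_self_le (div_nonneg hp.le hq.le)) hq.le

/-- For any two probability density functions `p` and `q` (w.r.t. a measure `μ`),
with `p` absolutely continuous w.r.t. `q`, the expectation under `p` of `|log (p/q)|`
is bounded by the KL divergence `∫ log (p/q) p dμ` plus `2/e`. -/
theorem expectation_abs_log_ratio_le_klDiv_add
    {X : Type*} [MeasurableSpace X] (μ : Measure X) (p q : X → ℝ)
    (hp0 : ∀ x, 0 ≤ p x) (hq0 : ∀ x, 0 ≤ q x)
    (hp1 : ∫ x, p x ∂μ = 1) (hq1 : ∫ x, q x ∂μ = 1)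
    (hac : ∀ x, p x ≠ 0 → q x ≠ 0)
    (hint : Integrable (fun x => |Real.log (p x / q x)| * p x) μ) :
    ∫ x, |Real.log (p x / q x)| * p x ∂μ ≤
      (∫ x, Real.log (p x / q x) * p x ∂μ) + 2 / Real.exp 1 := by
  have hp : Integrable p μ := .of_integral_ne_zero (by simp [hp1])
  have hq : Integrable q μ := .of_integral_ne_zero (by simp [hq1])
  have hlog : Integrable (fun x => Real.log (p x / q x) * p x) μ := by
    refine hint.mono' ?_ (.of_forall fun x => ?_)
    · exact ((measurable_log.comp_aemeasurable (hp.aemeasurable.div hq.aemeasurable)).mul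
        hp.aemeasurable).aestronglyMeasurable
    · rw [norm_mul, norm_of_nonneg (hp0 x), norm_eq_abs]
  have hgap : ∫ x, (|log (p x / q x)| * p x - log (p x / q x) * p x) ∂μ ≤
      ∫ x, 2 * exp (-1) * q x ∂μ :=
    integral_mono (hint.sub hlog) (hq.const_mul _) fun x =>
      (sub_mul _ _ _).symm.trans_le (abs_log_div_sub_log_div_mul_le (hp0 x) (hq0 x) (hac x))
  rw [integral_sub hint hlog, integral_const_mul, hq1, mul_one, exp_neg, ← div_eq_mul_inv]
    at hgap
  linarith
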